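/- Let q be a positive integer and let A, B ⊆ Z_q be sets with |A| = αq and |B| = βq, where α ≥ β > 0. Suppose that the least prime factor of q is greater than 2β^{-1} + 3. Then there exists a positive integer d with d ≤ α^{-(β^{-1} + 1)} such that d·Z_q ⊆ (A−A)(B−B), i.e., for every x ∈ Z_q there exist a, a' ∈ A and b, b' ∈ B with d·x = (a−a')(b−b') in Z_q (here d need not divide q). -/

import Mathlib

/-!
Let `K = ⌊β⁻¹⌋`. Since `(K + 1)|B| > q`, two of the sums `b + i x` (`b ∈ B`, `0 ≤ i ≤ K`)
coincide, so every `x` has a multiple `k x ∈ B - B` with `1 ≤ k ≤ K`. The same pigeonhole in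
`(ℤ/q)^K`, applied to the vector `(k⁻¹)_{k ≤ K}` and the box `A^K` of size `α^K q^K`, gives one
`d ≤ α^{-K}` with `d k⁻¹ ∈ A - A` for all `k ≤ K`; then `d x = (d k⁻¹)(k x) ∈ (A - A)(B - B)`.
The inverses exist because every `k ≤ K` is below the least prime factor of `q`.
-/

open Finset
open scoped Pointwise

theorem exists_nsmul_mem_sub_of_card_lt {G : Type*} [AddCommGroup G] [Fintype G]
    [DecidableEq G] {S : Finset G} {N : ℕ} (hS : Fintype.card G < #S * (N + 1)) (y : G) :
    ∃ n ∈ Icc 1 N, n • y ∈ S - S := by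
  have hcard : #(univ : Finset G) < #(S ×ˢ range (N + 1)) := by
    rwa [card_product, card_range, card_univ]
  obtain ⟨⟨s, i⟩, hsi, ⟨t, j⟩, htj, hne, heq⟩ :=
    exists_ne_map_eq_of_card_lt_of_maps_to hcard (f := fun p => p.1 + p.2 • y)
      fun _ _ ↦ mem_coe.2 (mem_univ _)
  simp only [mem_product, mem_range] at hsi htj heq
  have key : ∀ {s t : G} {i j : ℕ}, s ∈ S → t ∈ S → i < j → j < N + 1 →
      s + i • y = t + j • y → ∃ n ∈ Icc 1 N, n • y ∈ S - S := by
    intro s t i j hs ht hij hj h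
    refine ⟨j - i, mem_Icc.2 ⟨by omega, by omega⟩, ?_⟩
    rw [sub_nsmul y hij.le, ← sub_eq_add_neg,
      show j • y - i • y = s - t by rw [sub_eq_sub_iff_add_eq_add, h, add_comm]]
    exact sub_mem_sub hs ht
  rcases lt_trichotomy i j with hij | rfl | hij
  · exact key hsi.1 htj.1 hij htj.2 heq
  · exact absurd (by rw [add_right_cancel (b := i • y) heq]) hne
  · exact key htj.1 hsi.1 hij hsi.2 heq.symm

theorem lt_mul_mul_floor_inv_add_one {t y : ℝ} (ht : 0 < t) (hy : 0 < y) :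
    y < t * y * (⌊t⁻¹⌋₊ + 1) :=
  calc y = t * y * t⁻¹ := by field_simp
    _ < t * y * (⌊t⁻¹⌋₊ + 1) := by gcongr; exact Nat.lt_floor_add_one _

theorem inv_pow_le_rpow_neg {α s : ℝ} {K : ℕ} (hα : 0 < α) (hα1 : α ≤ 1) (hK : K ≤ s) :
    (α ^ K)⁻¹ ≤ α ^ (-s) := by
  rw [← Real.rpow_natCast, ← Real.rpow_neg hα.le]
  exact Real.rpow_le_rpow_of_exponent_ge hα hα1 (neg_le_neg hK)

theorem ZMod.isUnit_natCast_of_lt_minFac {q k : ℕ} (hk : k ≠ 0) (h : k < q.minFac) :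
    IsUnit (k : ZMod q) :=
  (ZMod.isUnit_iff_coprime k q).2 (Nat.coprime_of_lt_minFac hk h).symm

theorem exists_natCast_mul_mem_sub_mul_sub {R : Type*} [CommRing R] [Fintype R] [DecidableEq R]
    {A B : Finset R} {K N : ℕ} (hB : Fintype.card R < #B * (K + 1))
    (hA : Fintype.card R ^ K < #A ^ K * (N + 1)) (hunit : ∀ k ∈ Icc 1 K, IsUnit (k : R)) :
    ∃ d ∈ Icc 1 N, ∀ x : R, (d : R) * x ∈ (A - A) * (B - B) := by
  have hbox : Fintype.card (Icc 1 K → R) < #(Fintype.piFinset fun _ : Icc 1 K ↦ A) * (N + 1) := by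
    simpa [Fintype.card_piFinset] using hA
  obtain ⟨d, hd, hdA⟩ := exists_nsmul_mem_sub_of_card_lt hbox fun k ↦ Ring.inverse (k : R)
  refine ⟨d, hd, fun x ↦ ?_⟩
  obtain ⟨k, hk, hkB⟩ := exists_nsmul_mem_sub_of_card_lt hB x
  obtain ⟨b, hb, b', hb', hkx⟩ := mem_sub.1 hkB
  obtain ⟨a, ha, a', ha', had⟩ := mem_sub.1 hdA
  have hdk : a ⟨k, hk⟩ - a' ⟨k, hk⟩ = d * Ring.inverse (k : R) := by
    simpa [nsmul_eq_mul] using congrFun had ⟨k, hk⟩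
  have hkx : b - b' = k * x := by rwa [nsmul_eq_mul] at hkx
  have hfactor : (d : R) * x = (d * Ring.inverse (k : R)) * (k * x) := by
    rw [mul_assoc, ← mul_assoc (Ring.inverse _), Ring.inverse_mul_cancel _ (hunit k hk), one_mul]
  rw [hfactor, ← hdk, ← hkx]
  exact mul_mem_mul (sub_mem_sub (Fintype.mem_piFinset.1 ha _) (Fintype.mem_piFinset.1 ha' _))
    (sub_mem_sub hb hb')

theorem stmt18 (q : ℕ) (hq : 0 < q) (A B : Finset (ZMod q)) (α β : ℝ)
    (hA : (A.card : ℝ) = α * q) (hB : (B.card : ℝ) = β * q)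
    (hαβ : β ≤ α) (hβ : 0 < β)
    (hmin : 2 * β⁻¹ + 3 < (q.minFac : ℝ)) :
    ∃ d : ℕ, 0 < d ∧ (d : ℝ) ≤ α ^ (-(β⁻¹ + 1)) ∧
      ∀ x : ZMod q, ∃ a ∈ A, ∃ a' ∈ A, ∃ b ∈ B, ∃ b' ∈ B,
        (d : ZMod q) * x = (a - a') * (b - b') := by
  have : NeZero q := ⟨hq.ne'⟩
  have hqR : (0 : ℝ) < q := by exact_mod_cast hq
  have hα : 0 < α := hβ.trans_le hαβ
  have hα1 : α ≤ 1 := by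
    have : (#A : ℝ) ≤ q := by exact_mod_cast A.card_le_univ.trans_eq (ZMod.card q)
    nlinarith
  set K := ⌊β⁻¹⌋₊
  have hKβ : (K : ℝ) ≤ β⁻¹ := Nat.floor_le (inv_pos.2 hβ).le
  have hBK : Fintype.card (ZMod q) < #B * (K + 1) := by
    rw [ZMod.card]
    exact_mod_cast hB ▸ lt_mul_mul_floor_inv_add_one hβ hqR
  have hAN : Fintype.card (ZMod q) ^ K < #A ^ K * (⌊(α ^ K)⁻¹⌋₊ + 1) := by
    rw [ZMod.card]
    have := lt_mul_mul_floor_inv_add_one (pow_pos hα K) (pow_pos hqR K)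
    rw [← mul_pow, ← hA] at this
    exact_mod_cast this
  have hKmin : K < q.minFac := (Nat.cast_lt (α := ℝ)).1 (by linarith)
  have hunit (k : ℕ) (hk : k ∈ Icc 1 K) : IsUnit (k : ZMod q) :=
    ZMod.isUnit_natCast_of_lt_minFac (Nat.one_le_iff_ne_zero.1 (mem_Icc.1 hk).1)
      ((mem_Icc.1 hk).2.trans_lt hKmin)
  obtain ⟨d, hd, hdx⟩ := exists_natCast_mul_mem_sub_mul_sub hBK hAN hunit
  refine ⟨d, (mem_Icc.1 hd).1, ?_, fun x ↦ ?_⟩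
  · calc (d : ℝ) ≤ ⌊(α ^ K)⁻¹⌋₊ := by exact_mod_cast (mem_Icc.1 hd).2
      _ ≤ (α ^ K)⁻¹ := Nat.floor_le (by positivity)
      _ ≤ α ^ (-(β⁻¹ + 1)) := inv_pow_le_rpow_neg hα hα1 (by linarith)
  · obtain ⟨_, hA', _, hB', hx⟩ := mem_mul.1 (hdx x)
    obtain ⟨a, ha, a', ha', rfl⟩ := mem_sub.1 hA'
    obtain ⟨b, hb, b', hb', rfl⟩ := mem_sub.1 hB'
    exact ⟨a, ha, a', ha', b, hb, b', hb', hx.symm⟩
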